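/- arXiv:1704.06799 — 2 statements merged into one kernel-verified Lean document; each statement's English description precedes it below -/
import Mathlib

section
/- For all real numbers 0 ≤ q ≤ p, Λ > 0, M > 0, with η := min(M,q), and every natural number k, there exists C_k > 0 such that ∫_Λ^∞ (log₊(λ/M))^k / ((λ+p)(λ+q)) dλ ≤ C_k (1 + (log₊(p/(Λ+η)))^{k+1} + (log₊(Λ/M))^{k+1}) / (Λ + p + q). -/
/-
Put B := Λ + min M q ≤ P := Λ + p. For l > Λ we have (l + p)(l + q) ≥ max(l, P) · max(l, B),
and log₊ of ratios is subadditive: log₊(l/M) ≤ log₊(l/P) + c with c := log₊(P/B) + log₊(B/M).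
Since (1 + u)^k ≤ K_k e^{u/2}, the integrand is at most K_k (1 + c)^k times the majorant
√(max(1, l/P)) / (max(l, P) · max(l, B)), whose integral over (0, ∞) is (3 + log(P/B))/P:
the ranges l ≤ B, B ≤ l ≤ P and l ≥ P contribute 1/P, log(P/B)/P and 2/P. Finally
log₊(P/B) ≤ log 2 + log₊(p/B), log₊(B/M) ≤ log 2 + log₊(Λ/M) and Λ + p + q ≤ 2P.
-/

noncomputable def logPlus (x : ℝ) : ℝ := Real.log (max 1 x)

open MeasureTheory Set Real

lemma logPlus_nonneg (x : ℝ) : 0 ≤ logPlus x := log_nonneg (le_max_left _ _)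

lemma logPlus_mono : Monotone logPlus := fun _ _ h =>
  log_le_log (lt_max_of_lt_left one_pos) (max_le_max le_rfl h)

lemma log_le_logPlus {x : ℝ} (hx : 0 < x) : log x ≤ logPlus x :=
  log_le_log hx (le_max_right _ _)

lemma logPlus_mul_le (x : ℝ) {y : ℝ} (hy : 0 ≤ y) :
    logPlus (x * y) ≤ logPlus x + logPlus y := by
  have hx1 : (1 : ℝ) ≤ max 1 x := le_max_left _ _
  have hy1 : (1 : ℝ) ≤ max 1 y := le_max_left _ _
  rw [logPlus, logPlus, logPlus, ← log_mul (by positivity) (by positivity)]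
  refine log_le_log (lt_max_of_lt_left one_pos)
    (max_le (one_le_mul_of_one_le_of_one_le hx1 hy1) ?_)
  exact mul_le_mul (le_max_right _ _) (le_max_right _ _) hy (zero_le_one.trans hx1)

lemma logPlus_div_le_add (x : ℝ) {y z : ℝ} (hy : 0 < y) (hz : 0 ≤ z) :
    logPlus (x / z) ≤ logPlus (x / y) + logPlus (y / z) := by
  rw [← div_mul_div_cancel₀ (a := x) (c := z) hy.ne']
  exact logPlus_mul_le _ (div_nonneg hy.le hz)

lemma logPlus_one_add_le (x : ℝ) : logPlus (1 + x) ≤ log 2 + logPlus x := by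
  rw [logPlus, logPlus, ← log_mul two_ne_zero (by positivity)]
  refine log_le_log (lt_max_of_lt_left one_pos) (max_le ?_ ?_) <;>
    linarith [le_max_left 1 x, le_max_right 1 x]

lemma exists_one_add_logPlus_pow_le (k : ℕ) :
    ∃ K > 0, ∀ x : ℝ, (1 + logPlus x) ^ k ≤ K * max 1 x ^ (1 / 2 : ℝ) := by
  refine ⟨2 ^ k * k.factorial * exp (1 / 2), by positivity, fun x => ?_⟩
  set u := logPlus x
  have hsqrt : max 1 x ^ (1 / 2 : ℝ) = exp (u / 2) := by
    rw [rpow_def_of_pos (lt_max_of_lt_left one_pos), ← div_eq_mul_one_div]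
    rfl
  have hexp := pow_div_factorial_le_exp (x := (1 + u) / 2) (by linarith [logPlus_nonneg x]) k
  rw [div_le_iff₀ (by positivity), div_pow, div_le_iff₀ (by positivity)] at hexp
  rw [hsqrt]
  calc (1 + u) ^ k ≤ exp ((1 + u) / 2) * k.factorial * 2 ^ k := hexp
    _ = 2 ^ k * k.factorial * exp (1 / 2) * exp (u / 2) := by
      rw [mul_assoc _ (exp _), ← exp_add, add_div]
      ring

lemma one_add_add_pow_le {a b : ℝ} (ha : 0 ≤ a) (hb : 0 ≤ b) (n : ℕ) :
    (1 + a + b) ^ n ≤ 3 ^ n * (1 + a ^ n + b ^ n) := by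
  set m := max 1 (max a b)
  have hm : 1 + a + b ≤ 3 * m := by
    linarith [le_max_left 1 (max a b), le_max_left a b, le_max_right a b,
      le_max_right 1 (max a b)]
  have hmn : m ^ n ≤ 1 + a ^ n + b ^ n := by
    have := pow_nonneg ha n
    have := pow_nonneg hb n
    rcases max_cases 1 (max a b) with ⟨h, -⟩ | ⟨h, -⟩ <;> rw [show m = _ from h]
    · rw [one_pow]
      linarith
    · rcases max_cases a b with ⟨h', -⟩ | ⟨h', -⟩ <;> rw [h'] <;> linarith
  calc (1 + a + b) ^ n ≤ (3 * m) ^ n := pow_le_pow_left₀ (by positivity) hm n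
    _ ≤ 3 ^ n * (1 + a ^ n + b ^ n) := by
      rw [mul_pow]
      gcongr

lemma one_add_logPlus_add_logPlus_pow_le {Λ B M : ℝ} (p : ℝ) (hB : 0 < B) (hΛB : Λ ≤ B)
    (hBM : B ≤ Λ + M) (hM : 0 < M) (n : ℕ) :
    (1 + logPlus ((Λ + p) / B) + logPlus (B / M)) ^ n ≤
      9 ^ n * (1 + logPlus (p / B) ^ n + logPlus (Λ / M) ^ n) := by
  have hlogPB : logPlus ((Λ + p) / B) ≤ log 2 + logPlus (p / B) := by
    refine (logPlus_mono ?_).trans (logPlus_one_add_le _)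
    rw [add_div]
    gcongr
    exact div_le_one_of_le₀ hΛB hB.le
  have hlogBM : logPlus (B / M) ≤ log 2 + logPlus (Λ / M) := by
    refine (logPlus_mono ?_).trans (logPlus_one_add_le _)
    rw [add_comm 1, ← div_self hM.ne', ← add_div]
    gcongr
  have hsum : 1 + logPlus ((Λ + p) / B) + logPlus (B / M) ≤
      3 * (1 + logPlus (p / B) + logPlus (Λ / M)) := by
    linarith [log_two_lt_d9, logPlus_nonneg (p / B), logPlus_nonneg (Λ / M)]
  calc (1 + logPlus ((Λ + p) / B) + logPlus (B / M)) ^ n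
      ≤ (3 * (1 + logPlus (p / B) + logPlus (Λ / M))) ^ n :=
        pow_le_pow_left₀
          (by linarith [logPlus_nonneg ((Λ + p) / B), logPlus_nonneg (B / M)]) hsum n
    _ ≤ 3 ^ n * (3 ^ n * (1 + logPlus (p / B) ^ n + logPlus (Λ / M) ^ n)) := by
        rw [mul_pow]
        gcongr
        exact one_add_add_pow_le (logPlus_nonneg _) (logPlus_nonneg _) n
    _ = 9 ^ n * (1 + logPlus (p / B) ^ n + logPlus (Λ / M) ^ n) := by
        rw [← mul_assoc, ← mul_pow]
        norm_num

noncomputable def majorant (B P l : ℝ) : ℝ :=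
  max 1 (l / P) ^ (1 / 2 : ℝ) / (max l P * max l B)

section majorant

variable {B P : ℝ}

lemma majorant_nonneg (hB : 0 < B) (hP : 0 < P) (l : ℝ) : 0 ≤ majorant B P l :=
  div_nonneg (rpow_nonneg (zero_le_one.trans (le_max_left _ _)) _)
    (mul_nonneg (hP.le.trans (le_max_right _ _)) (hB.le.trans (le_max_right _ _)))

lemma majorant_of_le (hBP : B ≤ P) (hP : 0 < P) {l : ℝ} (hl : l ≤ B) :
    majorant B P l = (P * B)⁻¹ := by
  rw [majorant, max_eq_left ((div_le_one hP).2 (hl.trans hBP)), one_rpow, one_div,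
    max_eq_right (hl.trans hBP), max_eq_right hl]

lemma majorant_of_mem_Icc (hP : 0 < P) {l : ℝ} (hl : l ∈ Icc B P) :
    majorant B P l = P⁻¹ * l⁻¹ := by
  rw [majorant, max_eq_left ((div_le_one hP).2 hl.2), one_rpow, one_div,
    max_eq_right hl.2, max_eq_left hl.1, mul_inv]

lemma majorant_of_ge (hBP : B ≤ P) (hP : 0 < P) {l : ℝ} (hl : P ≤ l) :
    majorant B P l = P ^ (-(1 / 2) : ℝ) * l ^ (-(3 / 2) : ℝ) := by
  have hl0 : 0 < l := hP.trans_le hl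
  rw [majorant, max_eq_right ((one_le_div hP).2 hl), max_eq_left hl, max_eq_left (hBP.trans hl),
    div_rpow hl0.le hP.le, rpow_neg hP.le, show -(3 / 2 : ℝ) = 1 / 2 - 2 by norm_num,
    rpow_sub hl0, rpow_two]
  ring

lemma integral_majorant_Ioc_zero (hB : 0 < B) (hBP : B ≤ P) :
    IntegrableOn (majorant B P) (Ioc 0 B) ∧ ∫ l in Ioc 0 B, majorant B P l = P⁻¹ := by
  have h := fun l (hl : l ∈ Ioc 0 B) => majorant_of_le hBP (hB.trans_le hBP) hl.2
  refine ⟨(integrableOn_congr_fun h measurableSet_Ioc).2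
    (integrableOn_const measure_Ioc_lt_top.ne), ?_⟩
  rw [setIntegral_congr_fun measurableSet_Ioc h, setIntegral_const, measureReal_def,
    volume_Ioc, ENNReal.toReal_ofReal (by linarith), smul_eq_mul, sub_zero]
  field_simp

lemma integral_majorant_Ioc (hB : 0 < B) (hBP : B ≤ P) :
    IntegrableOn (majorant B P) (Ioc B P) ∧
      ∫ l in Ioc B P, majorant B P l = P⁻¹ * log (P / B) := by
  have hP : 0 < P := hB.trans_le hBP
  have h := fun l (hl : l ∈ Ioc B P) => majorant_of_mem_Icc hP (Ioc_subset_Icc_self hl)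
  have hinv : IntervalIntegrable (fun l : ℝ => l⁻¹) volume B P :=
    intervalIntegral.intervalIntegrable_inv
      (fun l hl => (hB.trans_le (uIcc_of_le hBP ▸ hl).1).ne') continuousOn_id
  refine ⟨(integrableOn_congr_fun h measurableSet_Ioc).2 (hinv.1.const_mul _), ?_⟩
  rw [setIntegral_congr_fun measurableSet_Ioc h, integral_const_mul,
    ← intervalIntegral.integral_of_le hBP, integral_inv_of_pos hB hP]

lemma integral_majorant_Ioi (hBP : B ≤ P) (hP : 0 < P) :
    IntegrableOn (majorant B P) (Ioi P) ∧ ∫ l in Ioi P, majorant B P l = 2 * P⁻¹ := by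
  have h := fun l (hl : l ∈ Ioi P) => majorant_of_ge hBP hP (le_of_lt hl)
  refine ⟨(integrableOn_congr_fun h measurableSet_Ioi).2
    ((integrableOn_Ioi_rpow_of_lt (by norm_num) hP).const_mul _), ?_⟩
  rw [setIntegral_congr_fun measurableSet_Ioi h, integral_const_mul,
    integral_Ioi_rpow_of_lt (by norm_num) hP, show -(3 / 2 : ℝ) + 1 = -(1 / 2) by norm_num,
    mul_div_assoc', mul_neg, neg_div_neg_eq, ← rpow_add hP]
  norm_num [rpow_neg_one]
  ring

lemma integral_majorant (hB : 0 < B) (hBP : B ≤ P) :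
    IntegrableOn (majorant B P) (Ioi 0) ∧
      ∫ l in Ioi 0, majorant B P l = (3 + log (P / B)) / P := by
  have hP : 0 < P := hB.trans_le hBP
  have middle := integral_majorant_Ioc hB hBP
  have right := integral_majorant_Ioi hBP hP
  have tail : IntegrableOn (majorant B P) (Ioi B) ∧
      ∫ l in Ioi B, majorant B P l = P⁻¹ * log (P / B) + 2 * P⁻¹ := by
    rw [← Ioc_union_Ioi_eq_Ioi hBP, setIntegral_union (Ioc_disjoint_Ioi le_rfl)
      measurableSet_Ioi middle.1 right.1, middle.2, right.2]
    exact ⟨middle.1.union right.1, rfl⟩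
  have left := integral_majorant_Ioc_zero hB hBP
  rw [← Ioc_union_Ioi_eq_Ioi hB.le, setIntegral_union (Ioc_disjoint_Ioi le_rfl) measurableSet_Ioi
    left.1 tail.1, left.2, tail.2]
  refine ⟨left.1.union tail.1, ?_⟩
  field_simp
  ring

end majorant

section integrand

variable {K : ℝ} {k : ℕ} {p q B P M : ℝ}

lemma logPlus_pow_le_mul_rpow
    (hK : ∀ x : ℝ, (1 + logPlus x) ^ k ≤ K * max 1 x ^ (1 / 2 : ℝ))
    (hB : 0 < B) (hP : 0 < P) (hM : 0 ≤ M) (l : ℝ) :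
    logPlus (l / M) ^ k ≤
      K * (1 + logPlus (P / B) + logPlus (B / M)) ^ k * max 1 (l / P) ^ (1 / 2 : ℝ) := by
  set c := logPlus (P / B) + logPlus (B / M)
  have hc : 0 ≤ c := add_nonneg (logPlus_nonneg _) (logPlus_nonneg _)
  have hu := logPlus_nonneg (l / P)
  have hle : logPlus (l / M) ≤ logPlus (l / P) + c := by
    linarith [logPlus_div_le_add l hP hM, logPlus_div_le_add P hB hM]
  calc logPlus (l / M) ^ k ≤ ((1 + logPlus (l / P)) * (1 + c)) ^ k :=
        pow_le_pow_left₀ (logPlus_nonneg _) (by nlinarith) k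
    _ = (1 + logPlus (l / P)) ^ k * (1 + c) ^ k := mul_pow _ _ _
    _ ≤ K * max 1 (l / P) ^ (1 / 2 : ℝ) * (1 + c) ^ k := by gcongr; exact hK _
    _ = _ := by ring

lemma logPlus_pow_div_le_majorant
    (hK : ∀ x : ℝ, (1 + logPlus x) ^ k ≤ K * max 1 x ^ (1 / 2 : ℝ))
    (hp : 0 ≤ p) (hq : 0 ≤ q) (hB : 0 < B) (hBP : B ≤ P) (hM : 0 ≤ M) {l : ℝ}
    (hPl : P ≤ l + p) (hBl : B ≤ l + q) :
    logPlus (l / M) ^ k / ((l + p) * (l + q)) ≤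
      K * (1 + logPlus (P / B) + logPlus (B / M)) ^ k * majorant B P l := by
  have hP : 0 < P := hB.trans_le hBP
  have hnum := logPlus_pow_le_mul_rpow hK hB hP hM l
  rw [majorant, mul_div_assoc']
  exact div_le_div₀ ((pow_nonneg (logPlus_nonneg _) k).trans hnum) hnum
    (mul_pos (hP.trans_le (le_max_right _ _)) (hB.trans_le (le_max_right _ _)))
    (mul_le_mul (max_le (le_add_of_nonneg_right hp) hPl) (max_le (le_add_of_nonneg_right hq) hBl)
      (hB.le.trans (le_max_right _ _)) (hP.le.trans hPl))

lemma setIntegral_Ioi_logPlus_pow_div_le {Λ : ℝ}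
    (hK : ∀ x : ℝ, (1 + logPlus x) ^ k ≤ K * max 1 x ^ (1 / 2 : ℝ))
    (hΛ : 0 ≤ Λ) (hp : 0 ≤ p) (hq : 0 ≤ q) (hB : 0 < B) (hBP : B ≤ P) (hM : 0 ≤ M)
    (hPΛ : P ≤ Λ + p) (hBΛ : B ≤ Λ + q) :
    ∫ l in Ioi Λ, logPlus (l / M) ^ k / ((l + p) * (l + q)) ≤
      3 * K * (1 + logPlus (P / B) + logPlus (B / M)) ^ (k + 1) / P := by
  set c := 1 + logPlus (P / B) + logPlus (B / M)
  have hP : 0 < P := hB.trans_le hBP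
  have hK0 : 0 ≤ K := zero_le_one.trans (by simpa [logPlus] using hK 1)
  have hc : 0 ≤ c := by linarith [logPlus_nonneg (P / B), logPlus_nonneg (B / M)]
  have hlog : 3 + log (P / B) ≤ 3 * c := by
    linarith [log_le_logPlus (div_pos hP hB), logPlus_nonneg (B / M), logPlus_nonneg (P / B)]
  have hmaj := integral_majorant hB hBP
  have hpoint : ∀ l ∈ Ioi Λ,
      logPlus (l / M) ^ k / ((l + p) * (l + q)) ≤ K * c ^ k * majorant B P l := fun l hl =>
    logPlus_pow_div_le_majorant hK hp hq hB hBP hM (by linarith [mem_Ioi.1 hl])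
      (by linarith [mem_Ioi.1 hl])
  have hnonneg : ∀ l ∈ Ioi Λ, 0 ≤ logPlus (l / M) ^ k / ((l + p) * (l + q)) := fun l hl =>
    div_nonneg (pow_nonneg (logPlus_nonneg _) _)
      (mul_nonneg (by linarith [mem_Ioi.1 hl]) (by linarith [mem_Ioi.1 hl]))
  calc ∫ l in Ioi Λ, logPlus (l / M) ^ k / ((l + p) * (l + q))
      ≤ ∫ l in Ioi Λ, K * c ^ k * majorant B P l :=
        integral_mono_of_nonneg (ae_restrict_of_forall_mem measurableSet_Ioi hnonneg)
          ((hmaj.1.mono_set (Ioi_subset_Ioi hΛ)).const_mul _)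
          (ae_restrict_of_forall_mem measurableSet_Ioi hpoint)
    _ ≤ ∫ l in Ioi 0, K * c ^ k * majorant B P l :=
        setIntegral_mono_set (hmaj.1.const_mul _)
          (ae_of_all _ fun l => mul_nonneg (by positivity) (majorant_nonneg hB hP l))
          (Ioi_subset_Ioi hΛ).eventuallyLE
    _ = K * c ^ k * (3 + log (P / B)) / P := by
        rw [integral_const_mul, hmaj.2, mul_div_assoc]
    _ ≤ K * c ^ k * (3 * c) / P := by gcongr
    _ = 3 * K * c ^ (k + 1) / P := by ring

end integrand

theorem stmt_4 (k : ℕ) :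
    ∃ C : ℝ, 0 < C ∧ ∀ p q Λ M : ℝ, 0 ≤ q → q ≤ p → 0 < Λ → 0 < M →
      (∫ l in Set.Ioi Λ, (logPlus (l / M)) ^ k / ((l + p) * (l + q))) ≤
        C * (1 + (logPlus (p / (Λ + min M q))) ^ (k + 1)
            + (logPlus (Λ / M)) ^ (k + 1)) / (Λ + p + q) := by
  obtain ⟨K, hK, hKpow⟩ := exists_one_add_logPlus_pow_le k
  refine ⟨6 * K * 9 ^ (k + 1), by positivity, fun p q Λ M hq hqp hΛ hM => ?_⟩
  set B := Λ + min M q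
  set S := 1 + logPlus (p / B) ^ (k + 1) + logPlus (Λ / M) ^ (k + 1)
  have hΛB : Λ ≤ B := le_add_of_nonneg_right (le_min hM.le hq)
  have hB : 0 < B := hΛ.trans_le hΛB
  have hBq : B ≤ Λ + q := add_le_add_right (min_le_right M q) Λ
  have hS : 0 ≤ S := by
    have := pow_nonneg (logPlus_nonneg (p / B)) (k + 1)
    have := pow_nonneg (logPlus_nonneg (Λ / M)) (k + 1)
    linarith
  calc ∫ l in Ioi Λ, logPlus (l / M) ^ k / ((l + p) * (l + q))
      ≤ 3 * K * (1 + logPlus ((Λ + p) / B) + logPlus (B / M)) ^ (k + 1) / (Λ + p) :=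
        setIntegral_Ioi_logPlus_pow_div_le hKpow hΛ.le (hq.trans hqp) hq hB (by linarith) hM.le
          le_rfl hBq
    _ ≤ 3 * K * (9 ^ (k + 1) * S) / ((Λ + p + q) / 2) := by
        gcongr
        · linarith
        · exact one_add_logPlus_add_logPlus_pow_le p hB hΛB
            (add_le_add_right (min_le_left M q) Λ) hM _
        · linarith
    _ = 6 * K * 9 ^ (k + 1) * S / (Λ + p + q) := by
        field_simp
        ring
end

section
/- Let 0 ≤ β ≤ 1 and h(x) := (e^{−βx²} − e^{−x²})/x for x > 0 (extended continuously at 0 by 0). Then for every natural number w and every constant C > 1, |h^{(w)}(x)| < w! e (C+1) (2√e C)^w / (1+x)^{w+1} for all x ≥ 0. -/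
/-!
Write `h(x) = x f(x²)` with `f(y) = ∫_β^1 e^{-sy} ds`. Comparing `∫_β^1 s^j e^{-sy} ds` with
`e ∫_0^∞ s^j e^{-(1+y)s} ds` gives `|f^{(j)}(y)| ≤ e j!/(1+y)^{j+1}`. If `H` is a primitive of `f`,
then `h(x) = ½ (H(x²))'`, so `h^{(w)}` is half the `(w+1)`-st derivative of `H(x²)`, a Hermite-type
sum `∑_k n!/(k!(n-2k)!) (2x)^{n-2k} H^{(n-k)}(x²)` with `n = w + 1`. Each term is bounded using
`x(1+x) ≤ (11/9)(1+x²)` and `(1+x)² ≤ 2(1+x²)`, and the binomial theorem sums the bounds to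
`|h^{(w)}(x)| (1+x)^{w+1} ≤ ½ e w! λ^{w+1}` with `λ = 2·(11/9) + 9/11 = 323/99 < 2√e`; the constant
`11/9` only has to lie between `max x(1+x)/(1+x²) = (1+√2)/2` and the point where `λ` reaches `2√e`.
-/

open Real Set MeasureTheory Finset Nat

/-- `n!/(k!(n-2k)!)`: up to sign, the coefficients of the (physicists') Hermite polynomials. -/
def sqCompCoeff (n k : ℕ) : ℕ := n.choose k * (n - k).descFactorial k

lemma sqCompCoeff_eq_zero {n k : ℕ} (h : n < 2 * k) : sqCompCoeff n k = 0 := by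
  rcases Nat.lt_or_ge n k with hnk | hkn
  · simp [sqCompCoeff, Nat.choose_eq_zero_of_lt hnk]
  · simp [sqCompCoeff, Nat.descFactorial_eq_zero_iff_lt.2 (by omega : n - k < k)]

lemma sqCompCoeff_zero_right (n : ℕ) : sqCompCoeff n 0 = 1 := by
  simp [sqCompCoeff]

lemma sqCompCoeff_mul_factorial_mul_factorial (k m : ℕ) :
    sqCompCoeff (2 * k + m) k * k ! * m ! = (2 * k + m)! := by
  have hdesc := Nat.factorial_mul_descFactorial (show k ≤ k + m by omega)
  rw [Nat.add_sub_cancel_left] at hdesc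
  rw [← Nat.choose_mul_factorial_mul_factorial (show k ≤ 2 * k + m by omega), sqCompCoeff,
    show 2 * k + m - k = k + m by omega, ← hdesc]
  ring

lemma sqCompCoeff_succ_succ (n k : ℕ) :
    sqCompCoeff (n + 1) (k + 1) = sqCompCoeff n (k + 1) + 2 * (n - 2 * k) * sqCompCoeff n k := by
  rcases Nat.lt_or_ge n (2 * k + 1) with hn | hn
  · rw [sqCompCoeff_eq_zero (by omega), sqCompCoeff_eq_zero (by omega),
      show n - 2 * k = 0 by omega]
    simp
  obtain ⟨m, rfl⟩ : ∃ m, n = 2 * k + 1 + m := ⟨n - (2 * k + 1), by omega⟩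
  have hnext : sqCompCoeff (2 * k + 1 + m) (k + 1) * (k + 1)! * m ! = (2 * k + 1 + m)! * m := by
    rcases m with _ | m
    · simp [sqCompCoeff_eq_zero (show 2 * k + 1 + 0 < 2 * (k + 1) by omega)]
    · have := sqCompCoeff_mul_factorial_mul_factorial (k + 1) m
      rw [show 2 * (k + 1) + m = 2 * k + 1 + (m + 1) by omega] at this
      rw [Nat.factorial_succ m, ← this]
      ring
  have hcur := sqCompCoeff_mul_factorial_mul_factorial k (m + 1)
  have htop := sqCompCoeff_mul_factorial_mul_factorial (k + 1) m
  rw [show 2 * k + (m + 1) = 2 * k + 1 + m by omega] at hcur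
  rw [show 2 * (k + 1) + m = 2 * k + 1 + m + 1 by omega] at htop
  apply Nat.eq_of_mul_eq_mul_right (Nat.mul_pos (Nat.factorial_pos (k + 1)) (Nat.factorial_pos m))
  rw [← mul_assoc, htop, show 2 * k + 1 + m - 2 * k = m + 1 by omega, add_mul, ← mul_assoc, hnext,
    Nat.factorial_succ (2 * k + 1 + m), Nat.factorial_succ k]
  rw [Nat.factorial_succ m] at hcur
  linear_combination 2 * (k + 1) * hcur.symm

lemma sqCompCoeff_succ_mul_factorial_le (n k : ℕ) :
    sqCompCoeff (n + 1) k * (n - k)! ≤ n ! * (n + 1).choose k := by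
  rcases Nat.lt_or_ge n k with hnk | hkn
  · simp [sqCompCoeff_eq_zero (show n + 1 < 2 * k by omega)]
  have key : (n + 1 - k).descFactorial k * (n - k)! ≤ n ! := by
    calc (n + 1 - k).descFactorial k * (n - k)! ≤ (n - k + 1).ascFactorial k * (n - k)! := by
          gcongr
          rw [show n + 1 - k = n - k + 1 by omega]
          exact (Nat.descFactorial_le_pow _ k).trans (Nat.pow_succ_le_ascFactorial _ k)
      _ = n ! := by rw [mul_comm, Nat.factorial_mul_ascFactorial, Nat.sub_add_cancel hkn]
  calc sqCompCoeff (n + 1) k * (n - k)!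
        = (n + 1).choose k * ((n + 1 - k).descFactorial k * (n - k)!) := by
        rw [sqCompCoeff]; ring
    _ ≤ (n + 1).choose k * n ! := by gcongr
    _ = n ! * (n + 1).choose k := mul_comm _ _

section SqComp

variable (Φ : ℕ → ℝ → ℝ)

/-- For `Φ j = g^{(j)}` this is the `n`-th derivative of `g(x²)`. The truncated `n - 2 * k` is
harmless since `sqCompCoeff n k = 0` for `n < 2 * k`. -/
def sqCompSum (n : ℕ) (x : ℝ) : ℝ :=
  ∑ k ∈ range (n + 1), (sqCompCoeff n k : ℝ) * (2 * x) ^ (n - 2 * k) * Φ (n - k) (x ^ 2)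

lemma sqCompSum_succ (n : ℕ) (x : ℝ) :
    sqCompSum Φ (n + 1) x = ∑ k ∈ range (n + 1), (sqCompCoeff n k : ℝ) *
      (2 * (n - 2 * k : ℕ) * (2 * x) ^ (n - 2 * k - 1) * Φ (n - k) (x ^ 2) +
        (2 * x) ^ (n - 2 * k + 1) * Φ (n - k + 1) (x ^ 2)) := by
  have hsplit : ∀ k ∈ range (n + 1),
      (sqCompCoeff (n + 1) (k + 1) : ℝ) * (2 * x) ^ (n + 1 - 2 * (k + 1)) *
          Φ (n + 1 - (k + 1)) (x ^ 2)
        = sqCompCoeff n (k + 1) * (2 * x) ^ (n - 2 * k - 1) * Φ (n - k) (x ^ 2) +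
          sqCompCoeff n k * (2 * (n - 2 * k : ℕ) * (2 * x) ^ (n - 2 * k - 1) *
            Φ (n - k) (x ^ 2)) := by
    intro k _
    rw [sqCompCoeff_succ_succ, show n + 1 - 2 * (k + 1) = n - 2 * k - 1 by omega,
      show n + 1 - (k + 1) = n - k by omega]
    push_cast
    ring
  have hraise : ∑ k ∈ range (n + 1),
        (sqCompCoeff n (k + 1) : ℝ) * (2 * x) ^ (n - 2 * k - 1) * Φ (n - k) (x ^ 2) +
      (sqCompCoeff (n + 1) 0 : ℝ) * (2 * x) ^ (n + 1 - 2 * 0) * Φ (n + 1 - 0) (x ^ 2) =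
      ∑ k ∈ range (n + 1),
        (sqCompCoeff n k : ℝ) * ((2 * x) ^ (n - 2 * k + 1) * Φ (n - k + 1) (x ^ 2)) := by
    rw [sum_range_succ, sqCompCoeff_eq_zero (show n < 2 * (n + 1) by omega), sum_range_succ',
      sqCompCoeff_zero_right, sqCompCoeff_zero_right]
    simp only [Nat.cast_zero, zero_mul, add_zero, mul_zero, Nat.sub_zero, Nat.cast_one, one_mul]
    congr 1
    refine sum_congr rfl fun k hk => ?_
    rcases Nat.lt_or_ge n (2 * (k + 1)) with hn | hn
    · simp [sqCompCoeff_eq_zero hn]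
    · rw [show n - 2 * (k + 1) + 1 = n - 2 * k - 1 by omega,
        show n - (k + 1) + 1 = n - k by have := mem_range.1 hk; omega]
      ring
  rw [sqCompSum, sum_range_succ', sum_congr rfl hsplit, sum_add_distrib, add_right_comm, hraise,
    ← sum_add_distrib]
  refine sum_congr rfl fun k _ => ?_
  ring

variable {Φ}

lemma hasDerivAt_sqCompSum (hΦ : ∀ j y, HasDerivAt (Φ j) (Φ (j + 1) y) y) (n : ℕ) (x : ℝ) :
    HasDerivAt (sqCompSum Φ n) (sqCompSum Φ (n + 1) x) x := by
  have hterm : ∀ k ∈ range (n + 1), HasDerivAt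
      (fun x => (sqCompCoeff n k : ℝ) * (2 * x) ^ (n - 2 * k) * Φ (n - k) (x ^ 2))
      ((sqCompCoeff n k : ℝ) *
        (2 * (n - 2 * k : ℕ) * (2 * x) ^ (n - 2 * k - 1) * Φ (n - k) (x ^ 2) +
          (2 * x) ^ (n - 2 * k + 1) * Φ (n - k + 1) (x ^ 2))) x := by
    intro k _
    have hlin : HasDerivAt (fun y : ℝ => 2 * y) 2 x := by
      simpa using (hasDerivAt_id x).const_mul (2 : ℝ)
    have hpow : HasDerivAt (fun y : ℝ => (2 * y) ^ (n - 2 * k))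
        ((n - 2 * k : ℕ) * (2 * x) ^ (n - 2 * k - 1) * 2) x :=
      (hasDerivAt_pow _ _).comp x hlin
    have hΦsq : HasDerivAt (fun y => Φ (n - k) (y ^ 2)) (Φ (n - k + 1) (x ^ 2) * (2 * x)) x := by
      simpa [Function.comp_def] using (hΦ (n - k) (x ^ 2)).comp x (hasDerivAt_pow 2 x)
    exact ((hpow.const_mul (sqCompCoeff n k : ℝ)).fun_mul hΦsq).congr_deriv
      (by rw [pow_succ]; ring)
  rw [sqCompSum_succ]
  exact HasDerivAt.fun_sum hterm

lemma iteratedDeriv_sqCompSum (hΦ : ∀ j y, HasDerivAt (Φ j) (Φ (j + 1) y) y) (n w : ℕ) :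
    iteratedDeriv w (sqCompSum Φ n) = sqCompSum Φ (n + w) := by
  induction w with
  | zero => rfl
  | succ w ih =>
    ext x
    rw [iteratedDeriv_succ, ih, (hasDerivAt_sqCompSum hΦ _ x).deriv, add_assoc]

end SqComp

lemma two_mul_pow_mul_one_add_pow_le {x : ℝ} (hx : 0 ≤ x) (k m : ℕ) :
    (2 * x) ^ m * (1 + x) ^ (2 * k + m) ≤ (22 / 9) ^ m * 2 ^ k * (1 + x ^ 2) ^ (k + m) := by
  have hmix : x * (1 + x) ≤ 11 / 9 * (1 + x ^ 2) := by nlinarith [sq_nonneg (x - 9 / 4)]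
  have hsq : (1 + x) ^ 2 ≤ 2 * (1 + x ^ 2) := by nlinarith [sq_nonneg (1 - x)]
  calc (2 * x) ^ m * (1 + x) ^ (2 * k + m) = 2 ^ m * (x * (1 + x)) ^ m * ((1 + x) ^ 2) ^ k := by
        rw [mul_pow, mul_pow, ← pow_mul, pow_add]; ring
    _ ≤ 2 ^ m * (11 / 9 * (1 + x ^ 2)) ^ m * (2 * (1 + x ^ 2)) ^ k := by gcongr
    _ = (22 / 9) ^ m * 2 ^ k * (1 + x ^ 2) ^ (k + m) := by
        rw [mul_pow, mul_pow, pow_add, show (22 / 9 : ℝ) = 2 * (11 / 9) by norm_num, mul_pow]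
        ring

section Bound

variable {Φ : ℕ → ℝ → ℝ} {A : ℝ}

lemma abs_sqCompSum_term_mul_le
    (hΦ : ∀ j y, 0 ≤ y → |Φ (j + 1) y| ≤ A * j ! / (1 + y) ^ (j + 1))
    {x : ℝ} (hx : 0 ≤ x) (n k : ℕ) :
    |(sqCompCoeff (n + 1) k : ℝ) * (2 * x) ^ (n + 1 - 2 * k) * Φ (n + 1 - k) (x ^ 2)| *
        (1 + x) ^ (n + 1) ≤
      A * n ! * ((9 / 11) ^ k * (22 / 9) ^ (n + 1 - k) * (n + 1).choose k) := by
  have hA : 0 ≤ A := by simpa using (abs_nonneg _).trans (hΦ 0 0 le_rfl)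
  rcases Nat.lt_or_ge (n + 1) (2 * k) with hk | hk
  · rw [sqCompCoeff_eq_zero hk]
    simp only [Nat.cast_zero, zero_mul, abs_zero]
    positivity
  obtain ⟨m, hm⟩ : ∃ m, n + 1 = 2 * k + m := ⟨n + 1 - 2 * k, by omega⟩
  have hΦx := hΦ (n - k) (x ^ 2) (sq_nonneg x)
  rw [show n - k + 1 = n + 1 - k by omega] at hΦx
  have hcoeff : (sqCompCoeff (n + 1) k * (n - k)! : ℝ) ≤ n ! * (n + 1).choose k := by
    exact_mod_cast sqCompCoeff_succ_mul_factorial_le n k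
  have hgeom := two_mul_pow_mul_one_add_pow_le hx k m
  rw [← hm, show k + m = n + 1 - k by omega] at hgeom
  rw [show n + 1 - 2 * k = m by omega]
  calc |(sqCompCoeff (n + 1) k : ℝ) * (2 * x) ^ m * Φ (n + 1 - k) (x ^ 2)| * (1 + x) ^ (n + 1)
      = sqCompCoeff (n + 1) k * (2 * x) ^ m * |Φ (n + 1 - k) (x ^ 2)| * (1 + x) ^ (n + 1) := by
        rw [abs_mul, abs_mul, abs_of_nonneg (by positivity), abs_of_nonneg (by positivity)]
    _ ≤ sqCompCoeff (n + 1) k * (2 * x) ^ m * (A * (n - k)! / (1 + x ^ 2) ^ (n + 1 - k)) *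
          (1 + x) ^ (n + 1) := by gcongr
    _ = A * (sqCompCoeff (n + 1) k * (n - k)!) *
          ((2 * x) ^ m * (1 + x) ^ (n + 1) / (1 + x ^ 2) ^ (n + 1 - k)) := by ring
    _ ≤ A * (n ! * (n + 1).choose k) * ((22 / 9) ^ m * 2 ^ k) := by
        gcongr
        rw [div_le_iff₀ (by positivity)]
        exact hgeom
    _ = A * n ! * ((9 / 11) ^ k * (22 / 9) ^ (n + 1 - k) * (n + 1).choose k) := by
        have htwo : (2 : ℝ) ^ k = (9 / 11) ^ k * (22 / 9) ^ k := by rw [← mul_pow]; norm_num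
        rw [show n + 1 - k = m + k by omega, pow_add, htwo]
        ring

lemma abs_sqCompSum_mul_le
    (hΦ : ∀ j y, 0 ≤ y → |Φ (j + 1) y| ≤ A * j ! / (1 + y) ^ (j + 1))
    {x : ℝ} (hx : 0 ≤ x) (n : ℕ) :
    |sqCompSum Φ (n + 1) x| * (1 + x) ^ (n + 1) ≤ A * n ! * (323 / 99) ^ (n + 1) := by
  calc |sqCompSum Φ (n + 1) x| * (1 + x) ^ (n + 1)
      ≤ ∑ k ∈ range (n + 2), |(sqCompCoeff (n + 1) k : ℝ) * (2 * x) ^ (n + 1 - 2 * k) *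
          Φ (n + 1 - k) (x ^ 2)| * (1 + x) ^ (n + 1) := by
        rw [← sum_mul]
        gcongr
        exact abs_sum_le_sum_abs _ _
    _ ≤ ∑ k ∈ range (n + 2),
          A * n ! * ((9 / 11) ^ k * (22 / 9) ^ (n + 1 - k) * (n + 1).choose k) :=
        sum_le_sum fun k _ => abs_sqCompSum_term_mul_le hΦ hx n k
    _ = A * n ! * (323 / 99) ^ (n + 1) := by
        rw [← mul_sum, show (323 / 99 : ℝ) = 9 / 11 + 22 / 9 by norm_num, add_pow]

end Bound

/-- The `j`-th derivative of `f(y) = (e^{-βy} - e^{-y})/y = ∫_β^1 e^{-sy} ds`. -/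
noncomputable def kernelDeriv (β : ℝ) (j : ℕ) (y : ℝ) : ℝ :=
  ∫ s in Ioc β 1, (-s) ^ j * exp (-(s * y))

lemma abs_neg_pow_mul_exp_le {s : ℝ} (hs0 : 0 ≤ s) (hs1 : s ≤ 1) (j : ℕ) (y : ℝ) :
    |(-s) ^ j * exp (-(s * y))| ≤ exp |y| := by
  rw [abs_mul, abs_pow, abs_neg, abs_of_nonneg hs0, abs_exp]
  have hexp : exp (-(s * y)) ≤ exp |y| := by
    gcongr
    calc -(s * y) ≤ |s * y| := neg_le_abs _
      _ = s * |y| := by rw [abs_mul, abs_of_nonneg hs0]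
      _ ≤ |y| := mul_le_of_le_one_left (abs_nonneg y) hs1
  calc s ^ j * exp (-(s * y)) ≤ 1 * exp |y| :=
        mul_le_mul (pow_le_one₀ hs0 hs1) hexp (exp_pos _).le zero_le_one
    _ = exp |y| := one_mul _

lemma hasDerivAt_kernelDeriv {β : ℝ} (hβ : 0 ≤ β) (j : ℕ) (y : ℝ) :
    HasDerivAt (kernelDeriv β j) (kernelDeriv β (j + 1) y) y := by
  have hmem : ∀ᵐ s ∂volume.restrict (Ioc β 1), 0 ≤ s ∧ s ≤ 1 := by
    filter_upwards [ae_restrict_mem measurableSet_Ioc] with s hs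
    exact ⟨hβ.trans hs.1.le, hs.2⟩
  refine (hasDerivAt_integral_of_dominated_loc_of_deriv_le (Metric.ball_mem_nhds y one_pos)
    (F := fun x s => (-s) ^ j * exp (-(s * x))) (F' := fun x s => (-s) ^ (j + 1) * exp (-(s * x)))
    (bound := fun _ => exp (|y| + 1)) (.of_forall fun x => by fun_prop)
    (by fun_prop : Continuous _).integrableOn_Ioc (by fun_prop) ?_ (integrable_const _) ?_).2
  · filter_upwards [hmem] with s hs x hx
    refine (abs_neg_pow_mul_exp_le hs.1 hs.2 _ x).trans (exp_le_exp.2 ?_)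
    have := abs_sub_abs_le_abs_sub x y
    rw [Metric.mem_ball, Real.dist_eq] at hx
    linarith
  · filter_upwards with s x _
    have hlin : HasDerivAt (fun x => -(s * x)) (-s) x := by
      simpa using ((hasDerivAt_id x).const_mul s).fun_neg
    exact (hlin.exp.const_mul ((-s) ^ j)).congr_deriv (by ring)

lemma integral_pow_mul_exp_neg_mul_Ioi {r : ℝ} (hr : 0 < r) (j : ℕ) :
    ∫ t in Ioi 0, t ^ j * exp (-(r * t)) = j ! / r ^ (j + 1) := by
  have h := integral_rpow_mul_exp_neg_mul_Ioi (a := j + 1) (by positivity) hr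
  rw [add_sub_cancel_right, Gamma_nat_eq_factorial, ← Nat.cast_succ, rpow_natCast] at h
  simp_rw [rpow_natCast] at h
  rw [h, one_div, inv_pow, inv_mul_eq_div]

lemma abs_kernelDeriv_le {β : ℝ} (hβ : 0 ≤ β) (j : ℕ) {y : ℝ} (hy : 0 ≤ y) :
    |kernelDeriv β j y| ≤ exp 1 * j ! / (1 + y) ^ (j + 1) := by
  have hr : 0 < 1 + y := by linarith
  have hval := integral_pow_mul_exp_neg_mul_Ioi hr j
  have hint : IntegrableOn (fun s => exp 1 * (s ^ j * exp (-((1 + y) * s)))) (Ioi 0) :=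
    (Integrable.of_integral_ne_zero (by rw [hval]; positivity)).const_mul _
  have hsub : Ioc β 1 ⊆ Ioi 0 := (Ioc_subset_Ioc_left hβ).trans Ioc_subset_Ioi_self
  calc |kernelDeriv β j y| ≤ ∫ s in Ioc β 1, exp 1 * (s ^ j * exp (-((1 + y) * s))) := by
        rw [kernelDeriv, ← norm_eq_abs]
        refine norm_integral_le_of_norm_le (hint.mono_set hsub) ?_
        filter_upwards [ae_restrict_mem measurableSet_Ioc] with s hs
        have hs0 : 0 ≤ s := hβ.trans hs.1.le
        rw [norm_mul, norm_pow, norm_neg, norm_of_nonneg hs0, norm_of_nonneg (exp_pos _).le,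
          mul_left_comm, ← exp_add]
        gcongr
        nlinarith [hs.2]
    _ ≤ ∫ s in Ioi 0, exp 1 * (s ^ j * exp (-((1 + y) * s))) := by
        refine setIntegral_mono_set hint ?_ hsub.eventuallyLE
        filter_upwards [ae_restrict_mem measurableSet_Ioi] with s hs
        exact mul_nonneg (exp_pos 1).le (mul_nonneg (pow_nonneg (le_of_lt hs) j) (exp_pos _).le)
    _ = exp 1 * j ! / (1 + y) ^ (j + 1) := by rw [integral_const_mul, hval, mul_div_assoc]

lemma kernelDeriv_zero {β : ℝ} (hβ : β ≤ 1) {y : ℝ} (hy : y ≠ 0) :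
    kernelDeriv β 0 y = (exp (-β * y) - exp (-y)) / y := by
  have hprim : ∀ s ∈ uIcc β 1, HasDerivAt (fun s => -exp (-(s * y)) / y) (exp (-(s * y))) s := by
    intro s _
    have hlin : HasDerivAt (fun s => -(s * y)) (-y) s := by
      simpa using ((hasDerivAt_id s).mul_const y).fun_neg
    exact (hlin.exp.neg.div_const y).congr_deriv (by field_simp)
  rw [kernelDeriv, ← intervalIntegral.integral_of_le hβ]
  simp only [pow_zero, one_mul]
  rw [intervalIntegral.integral_eq_sub_of_hasDerivAt hprim
    (Continuous.intervalIntegrable (by fun_prop) _ _)]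
  ring_nf

/-- The derivatives `H, f, f', f'', …` of a primitive `H` of `f`. -/
noncomputable def kernelFamily (β : ℝ) : ℕ → ℝ → ℝ
  | 0 => fun y => ∫ t in (0)..y, kernelDeriv β 0 t
  | j + 1 => kernelDeriv β j

lemma hasDerivAt_kernelFamily {β : ℝ} (hβ : 0 ≤ β) :
    ∀ j y, HasDerivAt (kernelFamily β j) (kernelFamily β (j + 1) y) y
  | 0, y => by
    have hcont : Continuous (kernelDeriv β 0) :=
      continuous_iff_continuousAt.2 fun y => (hasDerivAt_kernelDeriv hβ 0 y).continuousAt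
    exact (hcont.integral_hasStrictDerivAt 0 y).hasDerivAt
  | j + 1, y => hasDerivAt_kernelDeriv hβ j y

lemma expDiffQuot_eq_sqCompSum {β : ℝ} (hβ : β ≤ 1) :
    (fun t : ℝ => if t = 0 then 0 else (exp (-β * t ^ 2) - exp (-t ^ 2)) / t) =
      fun x => 2⁻¹ * sqCompSum (kernelFamily β) 1 x := by
  have hone : ∀ x, sqCompSum (kernelFamily β) 1 x = 2 * x * kernelDeriv β 0 (x ^ 2) := by
    intro x
    simp [sqCompSum, sum_range_succ, sqCompCoeff, kernelFamily]
  funext x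
  rw [hone]
  split_ifs with hx
  · simp [hx]
  · rw [kernelDeriv_zero hβ (pow_ne_zero 2 hx)]
    field_simp

lemma le_two_mul_sqrt_exp_one : (323 / 99 : ℝ) ≤ 2 * √(exp 1) := by
  have he := exp_one_gt_d9
  have : (323 / 198 : ℝ) ≤ √(exp 1) := Real.le_sqrt_of_sq_le (by linarith)
  linarith

theorem stmt_19 (β : ℝ) (hβ0 : 0 ≤ β) (hβ1 : β ≤ 1) (w : ℕ) (C : ℝ) (hC : 1 < C)
    (x : ℝ) (hx : 0 ≤ x) :
    |iteratedDeriv w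
        (fun t : ℝ => if t = 0 then 0
          else (Real.exp (-β * t ^ 2) - Real.exp (-t ^ 2)) / t) x| <
      (w.factorial : ℝ) * Real.exp 1 * (C + 1) *
        (2 * Real.sqrt (Real.exp 1) * C) ^ w / (1 + x) ^ (w + 1) := by
  have hbound : ∀ j y, 0 ≤ y → |kernelFamily β (j + 1) y| ≤ exp 1 * j ! / (1 + y) ^ (j + 1) :=
    fun j _ hy => abs_kernelDeriv_le hβ0 j hy
  have hS := abs_sqCompSum_mul_le hbound hx w
  have hlam : (323 / 99 : ℝ) ≤ 2 * √(exp 1) * C :=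
    le_two_mul_sqrt_exp_one.trans (le_mul_of_one_le_right (by positivity) hC.le)
  rw [expDiffQuot_eq_sqCompSum hβ1, iteratedDeriv_const_mul_field,
    iteratedDeriv_sqCompSum (hasDerivAt_kernelFamily hβ0), add_comm 1 w,
    lt_div_iff₀ (by positivity), abs_mul, abs_of_pos (by norm_num : (0 : ℝ) < 2⁻¹), mul_assoc]
  calc 2⁻¹ * (|sqCompSum (kernelFamily β) (w + 1) x| * (1 + x) ^ (w + 1))
      ≤ 2⁻¹ * (exp 1 * w ! * (323 / 99) ^ (w + 1)) := by gcongr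
    _ = w ! * exp 1 * (323 / 198) * (323 / 99) ^ w := by ring
    _ ≤ w ! * exp 1 * (323 / 198) * (2 * √(exp 1) * C) ^ w := by gcongr
    _ < w ! * exp 1 * (C + 1) * (2 * √(exp 1) * C) ^ w := by
        gcongr
        linarith
end
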